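/- For every point P ∈ E(K) with P ≠ O one has −log d(P, O) = (1/2) log⁺|x(P)|, where log⁺ t = log max(t, 1); equivalently, d(P, O) = 1 if |x(P)| ≤ 1, and d(P, O) = |x(P)|^{−1/2} if |x(P)| > 1. -/

import Mathlib

open WeierstrassCurve

variable {K : Type*} [NontriviallyNormedField K] [IsUltrametricDist K]
  [CompleteSpace K] [IsAlgClosed K]

/-- The "kernel of reduction" `B°`: the identity together with the affine points
with `|x| > 1`. -/
def kernelOfReduction (W : WeierstrassCurve.Affine K) : Set W.Point :=
  {P | P = 0 ∨ ∃ (x y : K) (h : W.Nonsingular x y), P = .some _ _ h ∧ 1 < ‖x‖}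

/-- The local parameter `z = -x/y` at the origin, defined to be `0` at the identity. -/
noncomputable def zmap (W : WeierstrassCurve.Affine K) : W.Point → K
  | .zero => 0
  | @WeierstrassCurve.Affine.Point.some _ _ _ x y _ => -x / y

open Classical in
/-- The non-archimedean metric `d` on `E(K)`: `d(P,Q) = |z(P - Q)|` if `P - Q ∈ B°`,
and `d(P,Q) = 1` otherwise. -/
noncomputable def ellDist (W : WeierstrassCurve.Affine K) (P Q : W.Point) : ℝ :=
  letI := Classical.propDecidable (P - Q ∈ kernelOfReduction W)
  if P - Q ∈ kernelOfReduction W then ‖zmap W (P - Q)‖ else 1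

/-! If `|x| > 1` then in `y(y + a₁x + a₃) = x³ + a₂x² + a₄x + a₆` the right side has norm `|x|³`,
since `x³` dominates. The left side can only be that large if `|y| > |x|`, and then its norm is
`|y|²`. Hence `|y|² = |x|³`, so `|z| = |x/y| = |x|^{-1/2}`. -/

section Ultrametric

variable {F : Type*} [NormedField F] [IsUltrametricDist F]

lemma IsUltrametricDist.norm_add_eq_left_of_norm_lt {E : Type*} [SeminormedAddCommGroup E]
    [IsUltrametricDist E] {a b : E} (h : ‖b‖ < ‖a‖) : ‖a + b‖ = ‖a‖ := by
  rw [IsUltrametricDist.norm_add_eq_max_of_norm_ne_norm h.ne', max_eq_left h.le]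

lemma norm_mul_add_le_of_norm_le_one {a b x : F} (ha : ‖a‖ ≤ 1) (hb : ‖b‖ ≤ 1)
    (hx : 1 ≤ ‖x‖) : ‖a * x + b‖ ≤ ‖x‖ := by
  refine (IsUltrametricDist.norm_add_le_max _ _).trans (max_le ?_ (hb.trans hx))
  rw [norm_mul]
  exact mul_le_of_le_one_left (norm_nonneg x) ha

lemma norm_quadratic_le_of_norm_le_one {a b c x : F} (ha : ‖a‖ ≤ 1) (hb : ‖b‖ ≤ 1)
    (hc : ‖c‖ ≤ 1) (hx : 1 ≤ ‖x‖) : ‖a * x ^ 2 + b * x + c‖ ≤ ‖x‖ ^ 2 := by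
  have hsplit : a * x ^ 2 + b * x + c = x * (a * x + b) + c := by ring
  rw [hsplit]
  refine (IsUltrametricDist.norm_add_le_max _ _).trans (max_le ?_ (hc.trans (one_le_pow₀ hx)))
  rw [norm_mul, sq]
  exact mul_le_mul_of_nonneg_left (norm_mul_add_le_of_norm_le_one ha hb hx) (norm_nonneg x)

lemma WeierstrassCurve.Affine.norm_sq_eq_norm_cube_of_one_lt_norm
    {W : WeierstrassCurve.Affine F}
    (ha₁ : ‖W.a₁‖ ≤ 1) (ha₂ : ‖W.a₂‖ ≤ 1) (ha₃ : ‖W.a₃‖ ≤ 1)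
    (ha₄ : ‖W.a₄‖ ≤ 1) (ha₆ : ‖W.a₆‖ ≤ 1) {x y : F} (heq : W.Equation x y)
    (hx : 1 < ‖x‖) : ‖y‖ ^ 2 = ‖x‖ ^ 3 := by
  have hx_sq_lt_cube : ‖x‖ ^ 2 < ‖x‖ ^ 3 := pow_lt_pow_right₀ hx (by norm_num)
  have htail : ‖W.a₂ * x ^ 2 + W.a₄ * x + W.a₆‖ < ‖x ^ 3‖ := by
    rw [norm_pow]
    exact (norm_quadratic_le_of_norm_le_one ha₂ ha₄ ha₆ hx.le).trans_lt hx_sq_lt_cube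
  have hrhs : ‖x ^ 3 + (W.a₂ * x ^ 2 + W.a₄ * x + W.a₆)‖ = ‖x‖ ^ 3 := by
    rw [IsUltrametricDist.norm_add_eq_left_of_norm_lt htail, norm_pow]
  have hlin : ‖W.a₁ * x + W.a₃‖ ≤ ‖x‖ := norm_mul_add_le_of_norm_le_one ha₁ ha₃ hx.le
  have hfactor : ‖y‖ * ‖y + (W.a₁ * x + W.a₃)‖ = ‖x‖ ^ 3 := by
    rw [← norm_mul, ← hrhs]
    congr 1
    linear_combination (W.equation_iff x y).mp heq
  rcases le_or_gt ‖y‖ ‖x‖ with hyx | hxy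
  · have hsum : ‖y + (W.a₁ * x + W.a₃)‖ ≤ ‖x‖ :=
      (IsUltrametricDist.norm_add_le_max _ _).trans (max_le hyx hlin)
    have hle : ‖y‖ * ‖y + (W.a₁ * x + W.a₃)‖ ≤ ‖x‖ ^ 2 := by
      rw [sq]
      exact mul_le_mul hyx hsum (norm_nonneg _) (norm_nonneg _)
    linarith
  · rwa [IsUltrametricDist.norm_add_eq_left_of_norm_lt (hlin.trans_lt hxy), ← sq] at hfactor

end Ultrametric

lemma Real.neg_log_div_of_sq_eq_cube {a b : ℝ} (ha : 0 < a) (hab : b ^ 2 = a ^ 3) :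
    -Real.log (a / b) = 1 / 2 * Real.log a := by
  have hb : b ≠ 0 := by
    rintro rfl
    exact (pow_pos ha 3).ne' (by simpa using hab.symm)
  have hlog : 2 * Real.log b = 3 * Real.log a := by
    simpa only [Real.log_pow, Nat.cast_ofNat] using congrArg Real.log hab
  rw [Real.log_div ha.ne' hb]
  linarith

section Distance

variable {F : Type*} [NontriviallyNormedField F]

open Classical in
lemma ellDist_zero_right {W : WeierstrassCurve.Affine F} (P : W.Point) :
    ellDist W P 0 = if P ∈ kernelOfReduction W then ‖zmap W P‖ else 1 := by
  have hsub : P - 0 = P := sub_zero P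
  rw [ellDist, hsub]

lemma ellDist_some_zero_of_one_lt_norm {W : WeierstrassCurve.Affine F} {x y : F}
    (h : W.Nonsingular x y) (hx : 1 < ‖x‖) : ellDist W (.some _ _ h) 0 = ‖x‖ / ‖y‖ := by
  have hmem : (Affine.Point.some _ _ h : W.Point) ∈ kernelOfReduction W :=
    Or.inr ⟨x, y, h, rfl, hx⟩
  rw [ellDist_zero_right, if_pos hmem]
  rw [zmap, norm_div, norm_neg]

lemma ellDist_some_zero_of_norm_le_one {W : WeierstrassCurve.Affine F} {x y : F}
    (h : W.Nonsingular x y) (hx : ‖x‖ ≤ 1) : ellDist W (.some _ _ h) 0 = 1 := by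
  have hmem : (Affine.Point.some _ _ h : W.Point) ∉ kernelOfReduction W := by
    rintro (h0 | ⟨x', y', h', hP, hx'⟩)
    · exact Affine.Point.some_ne_zero h h0
    · rw [Affine.Point.some.injEq] at hP
      exact hx.not_gt (hP.1 ▸ hx')
  rw [ellDist_zero_right, if_neg hmem]

end Distance

theorem stmt_11_general (W : WeierstrassCurve.Affine K)
    (ha₁ : ‖W.a₁‖ ≤ 1) (ha₂ : ‖W.a₂‖ ≤ 1) (ha₃ : ‖W.a₃‖ ≤ 1)
    (ha₄ : ‖W.a₄‖ ≤ 1) (ha₆ : ‖W.a₆‖ ≤ 1) (x y : K) (h : W.Nonsingular x y) :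
    -Real.log (ellDist W (.some _ _ h) 0) = (1 / 2) * Real.log (max ‖x‖ 1) := by
  rcases lt_or_ge 1 ‖x‖ with hx | hx
  · rw [ellDist_some_zero_of_one_lt_norm h hx, max_eq_left hx.le]
    exact Real.neg_log_div_of_sq_eq_cube (one_pos.trans hx)
      (W.norm_sq_eq_norm_cube_of_one_lt_norm ha₁ ha₂ ha₃ ha₄ ha₆ h.1 hx)
  · rw [ellDist_some_zero_of_norm_le_one h hx, max_eq_right hx]
    simp

theorem stmt_11 (W : WeierstrassCurve.Affine K) (hΔ : W.Δ ≠ 0)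
    (ha₁ : ‖W.a₁‖ ≤ 1) (ha₂ : ‖W.a₂‖ ≤ 1) (ha₃ : ‖W.a₃‖ ≤ 1)
    (ha₄ : ‖W.a₄‖ ≤ 1) (ha₆ : ‖W.a₆‖ ≤ 1) (x y : K) (h : W.Nonsingular x y) :
    -Real.log (ellDist W (.some _ _ h) 0) = (1 / 2) * Real.log (max ‖x‖ 1) :=
  stmt_11_general W ha₁ ha₂ ha₃ ha₄ ha₆ x y h
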